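/- Let N ≥ 1 and let γ, δ ∈ ℝ^{N} be vectors with nonnegative entries indexed by 0,…,N-1 satisfying ‖γ‖₂² + ‖δ‖₂² ≤ N. Then 2 ∑_{d=1}^{N-1} (1/d) ∑_{i=0}^{d-1} γ_i δ_{d-1-i} ≤ π N. -/

import Mathlib

/-!
Schur test for the Hilbert matrix `1 / (i + j + 1)` with weights `√(i + 1/2)`: by AM-GM,
`x y / (p + q) ≤ (x² w p q + y² w q p) / 2` with `w p q = √p / ((p + q) √q)`,
`p = i + 1/2`, `q = j + 1/2`. Since `w p` decreases, each row sum `∑_j w p (j + 1/2)` is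
bounded by `∫₀^∞ w p t dt = π`, the antiderivative being `2 arctan √(t / p)`.
Dropping the truncation `i + j < N - 1` only enlarges the nonnegative double sum.
-/

open Real Finset

theorem Real.div_one_add_sq_le_arctan {t : ℝ} (ht : 0 ≤ t) : t / (1 + t ^ 2) ≤ arctan t := by
  have hsin : t / (1 + t ^ 2) = sin (2 * arctan t) / 2 := by
    have : (0 : ℝ) < √(1 + t ^ 2) := by positivity
    rw [sin_two_mul, sin_arctan, cos_arctan]
    field_simp
    rw [sq_sqrt (by positivity)]
  rw [hsin]
  linarith [sin_le (by positivity : 0 ≤ 2 * arctan t)]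

noncomputable def hilbertKernel (m x : ℝ) : ℝ := √m / ((m + x) * √x)

noncomputable def hilbertKernelPrimitive (m x : ℝ) : ℝ := 2 * arctan √(x / m)

theorem continuous_hilbertKernelPrimitive (m : ℝ) : Continuous (hilbertKernelPrimitive m) := by
  unfold hilbertKernelPrimitive
  fun_prop

theorem hilbertKernelPrimitive_of_nonpos {m x : ℝ} (hm : 0 ≤ m) (hx : x ≤ 0) :
    hilbertKernelPrimitive m x = 0 := by
  rw [hilbertKernelPrimitive, sqrt_eq_zero'.2 (div_nonpos_of_nonpos_of_nonneg hx hm),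
    arctan_zero, mul_zero]

theorem hasDerivAt_hilbertKernelPrimitive {m x : ℝ} (hm : 0 < m) (hx : 0 < x) :
    HasDerivAt (hilbertKernelPrimitive m) (hilbertKernel m x) x := by
  have h := (((hasDerivAt_id x).div_const m).sqrt (by positivity)).arctan.const_mul 2
  refine h.congr_deriv ?_
  obtain ⟨r, hr, rfl⟩ : ∃ r, 0 < r ∧ r ^ 2 = m := ⟨√m, sqrt_pos.2 hm, sq_sqrt hm.le⟩
  obtain ⟨s, hs, rfl⟩ : ∃ s, 0 < s ∧ s ^ 2 = x := ⟨√x, sqrt_pos.2 hx, sq_sqrt hx.le⟩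
  simp only [hilbertKernel, id, div_pow, sqrt_div' _ (sq_nonneg r), sqrt_sq hr.le, sqrt_sq hs.le]
  field_simp

theorem hilbertKernel_antitoneOn {m : ℝ} (hm : 0 ≤ m) :
    AntitoneOn (hilbertKernel m) (Set.Ioi 0) := by
  intro x (hx : 0 < x) y (hy : 0 < y) hxy
  unfold hilbertKernel
  gcongr

theorem hilbertKernel_mul_sub_le {m a b : ℝ} (hm : 0 < m) (ha : 0 < a) (hab : a ≤ b) :
    hilbertKernel m b * (b - a) ≤ hilbertKernelPrimitive m b - hilbertKernelPrimitive m a := by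
  rcases hab.eq_or_lt with rfl | hab
  · simp
  obtain ⟨c, hc, hslope⟩ := exists_hasDerivAt_eq_slope (hilbertKernelPrimitive m)
    (hilbertKernel m) hab (continuous_hilbertKernelPrimitive m).continuousOn
    fun x hx ↦ hasDerivAt_hilbertKernelPrimitive hm (ha.trans hx.1)
  have hbc : hilbertKernel m b ≤ hilbertKernel m c :=
    hilbertKernel_antitoneOn hm.le (ha.trans hc.1) (ha.trans hab) hc.2.le
  rwa [hslope, le_div_iff₀ (sub_pos.2 hab)] at hbc

/-- The first cell `[0, 1/2]` has length `1/2`, so monotonicity falls short here; instead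
substitute `m = 1 / (2 t²)` and use `t / (1 + t²) ≤ arctan t`. -/
theorem hilbertKernel_half_le {m : ℝ} (hm : 0 < m) :
    hilbertKernel m (1 / 2) ≤ hilbertKernelPrimitive m (1 / 2) := by
  obtain ⟨t, ht, rfl⟩ : ∃ t, 0 < t ∧ 1 / (2 * t ^ 2) = m :=
    ⟨√((1 / 2) / m), by positivity, by rw [sq_sqrt (by positivity)]; field_simp⟩
  have hkernel : hilbertKernel (1 / (2 * t ^ 2)) (1 / 2) = 2 * (t / (1 + t ^ 2)) := by
    have hsqrt : √(1 / (2 * t ^ 2)) = √(1 / 2) / t := by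
      rw [show 1 / (2 * t ^ 2) = 1 / 2 / t ^ 2 by ring, sqrt_div' _ (sq_nonneg t), sqrt_sq ht.le]
    have : 0 < √(1 / 2 : ℝ) := by positivity
    rw [hilbertKernel, hsqrt]
    field_simp
  have hprim : hilbertKernelPrimitive (1 / (2 * t ^ 2)) (1 / 2) = 2 * arctan t := by
    rw [hilbertKernelPrimitive, show (1 / 2) / (1 / (2 * t ^ 2)) = t ^ 2 by field_simp,
      sqrt_sq ht.le]
  rw [hkernel, hprim]
  linarith [div_one_add_sq_le_arctan ht.le]

theorem hilbertKernel_le_sub {m : ℝ} (hm : 0 < m) (j : ℕ) :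
    hilbertKernel m (j + 1 / 2) ≤
      hilbertKernelPrimitive m ((j + 1 : ℕ) - 1 / 2) - hilbertKernelPrimitive m (j - 1 / 2) := by
  rcases j with _ | k
  · rw [hilbertKernelPrimitive_of_nonpos (x := ((0 : ℕ) : ℝ) - 1 / 2) hm.le (by norm_num)]
    norm_num [hilbertKernel_half_le hm]
  · have h := hilbertKernel_mul_sub_le hm (a := k + 1 / 2) (b := k + 1 + 1 / 2) (by positivity)
      (by linarith)
    rw [show (k : ℝ) + 1 + 1 / 2 - (k + 1 / 2) = 1 by ring, mul_one] at h
    push_cast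
    convert h using 3 <;> ring

theorem sum_range_hilbertKernel_le_pi {m : ℝ} (hm : 0 < m) (M : ℕ) :
    ∑ j ∈ range M, hilbertKernel m (j + 1 / 2) ≤ π := by
  set u : ℕ → ℝ := fun j ↦ hilbertKernelPrimitive m (j - 1 / 2)
  -- `√` of a negative number is `0`, so the telescoping starts from `u 0 = 0`.
  have hu0 : u 0 = 0 := hilbertKernelPrimitive_of_nonpos hm.le (by norm_num)
  have huM : u M < π := by
    simp only [u, hilbertKernelPrimitive]
    linarith [arctan_lt_pi_div_two √((M - 1 / 2) / m)]
  calc ∑ j ∈ range M, hilbertKernel m (j + 1 / 2)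
      ≤ ∑ j ∈ range M, (u (j + 1) - u j) := sum_le_sum fun j _ ↦ hilbertKernel_le_sub hm j
    _ = u M - u 0 := sum_range_sub u M
    _ ≤ π := by linarith

theorem mul_div_add_le_hilbertKernel {p q : ℝ} (hp : 0 < p) (hq : 0 < q) (x y : ℝ) :
    x * y / (p + q) ≤ (x ^ 2 * hilbertKernel p q + y ^ 2 * hilbertKernel q p) / 2 := by
  obtain ⟨r, hr, rfl⟩ : ∃ r, 0 < r ∧ r ^ 2 = p := ⟨√p, sqrt_pos.2 hp, sq_sqrt hp.le⟩
  obtain ⟨s, hs, rfl⟩ : ∃ s, 0 < s ∧ s ^ 2 = q := ⟨√q, sqrt_pos.2 hq, sq_sqrt hq.le⟩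
  have hgap : (x ^ 2 * hilbertKernel (r ^ 2) (s ^ 2) + y ^ 2 * hilbertKernel (s ^ 2) (r ^ 2)) / 2
      - x * y / (r ^ 2 + s ^ 2) = (x * r - y * s) ^ 2 / (2 * (r ^ 2 + s ^ 2) * r * s) := by
    simp only [hilbertKernel, sqrt_sq hr.le, sqrt_sq hs.le]
    field_simp
    ring
  have : 0 ≤ (x * r - y * s) ^ 2 / (2 * (r ^ 2 + s ^ 2) * r * s) := by positivity
  linarith

theorem sum_range_sum_range_mul_div_add_add_one_le (M : ℕ) (x y : ℕ → ℝ) :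
    ∑ i ∈ range M, ∑ j ∈ range M, x i * y j / (i + j + 1) ≤
      π / 2 * ∑ i ∈ range M, (x i ^ 2 + y i ^ 2) := by
  set w : ℕ → ℕ → ℝ := fun i j ↦ hilbertKernel (i + 1 / 2) (j + 1 / 2)
  have hrow (i : ℕ) : ∑ j ∈ range M, w i j ≤ π := sum_range_hilbertKernel_le_pi (by positivity) M
  calc ∑ i ∈ range M, ∑ j ∈ range M, x i * y j / (i + j + 1)
      ≤ ∑ i ∈ range M, ∑ j ∈ range M, (x i ^ 2 * w i j + y j ^ 2 * w j i) / 2 := by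
        refine sum_le_sum fun i _ ↦ sum_le_sum fun j _ ↦ ?_
        have h := mul_div_add_le_hilbertKernel (p := i + 1 / 2) (q := j + 1 / 2)
          (by positivity) (by positivity) (x i) (y j)
        rwa [show (i : ℝ) + 1 / 2 + (j + 1 / 2) = i + j + 1 by ring] at h
    _ = (∑ i ∈ range M, x i ^ 2 * ∑ j ∈ range M, w i j +
          ∑ j ∈ range M, y j ^ 2 * ∑ i ∈ range M, w j i) / 2 := by
        simp only [add_div, sum_add_distrib, ← sum_div, mul_sum]
        congr 2
        exact sum_comm
    _ ≤ (∑ i ∈ range M, x i ^ 2 * π + ∑ j ∈ range M, y j ^ 2 * π) / 2 := by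
        gcongr with i _ j _ <;> exact hrow _
    _ = π / 2 * ∑ i ∈ range M, (x i ^ 2 + y i ^ 2) := by
        rw [← sum_add_distrib, mul_sum, sum_div]
        exact sum_congr rfl fun i _ ↦ by ring

theorem sum_Icc_sum_range_le_sum_range_sum_range (M : ℕ) {F : ℕ → ℕ → ℝ}
    (hF : ∀ i j, 0 ≤ F i j) :
    ∑ d ∈ Icc 1 M, ∑ i ∈ range d, F i (d - 1 - i) ≤ ∑ i ∈ range M, ∑ j ∈ range M, F i j := by
  rw [sum_sigma', ← sum_product']
  have hinj : Set.InjOn (fun p : (_ : ℕ) × ℕ ↦ (p.2, p.1 - 1 - p.2)) ((Icc 1 M).sigma range) := by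
    rintro ⟨d, i⟩ hdi ⟨d', i'⟩ hdi' h
    simp only [coe_sigma, Set.mem_sigma_iff, coe_Icc, Set.mem_Icc, coe_range, Set.mem_Iio,
      Prod.mk.injEq] at hdi hdi' h
    obtain ⟨rfl, h⟩ := h
    obtain rfl : d = d' := by omega
    rfl
  rw [← sum_image (f := fun q : ℕ × ℕ ↦ F q.1 q.2) fun a ha b hb h ↦ hinj ha hb h]
  refine sum_le_sum_of_subset_of_nonneg ?_ fun q _ _ ↦ hF q.1 q.2
  intro q hq
  obtain ⟨⟨d, i⟩, hdi, rfl⟩ := mem_image.1 hq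
  simp only [mem_sigma, mem_Icc, mem_range] at hdi
  simp only [mem_product, mem_range]
  omega

theorem weighted_convolution_le_pi_N (N : ℕ) (γ δ : ℕ → ℝ)
    (hγ : ∀ i, 0 ≤ γ i) (hδ : ∀ i, 0 ≤ δ i)
    (hnorm : (∑ i ∈ Finset.range N, ((γ i) ^ 2 + (δ i) ^ 2)) ≤ N) :
    2 * ∑ d ∈ Finset.Icc 1 (N - 1), (1 / (d : ℝ)) *
        ∑ i ∈ Finset.range d, γ i * δ (d - 1 - i) ≤ Real.pi * N := by
  have hconv : ∑ d ∈ Icc 1 (N - 1), (1 / (d : ℝ)) * ∑ i ∈ range d, γ i * δ (d - 1 - i) =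
      ∑ d ∈ Icc 1 (N - 1), ∑ i ∈ range d, γ i * δ (d - 1 - i) / (i + (d - 1 - i : ℕ) + 1) := by
    refine sum_congr rfl fun d _ ↦ ?_
    rw [mul_sum]
    refine sum_congr rfl fun i hi ↦ ?_
    have hd : (i : ℝ) + (d - 1 - i : ℕ) + 1 = d := by
      have := mem_range.1 hi
      rw [Nat.cast_sub (by omega), Nat.cast_sub (by omega)]
      push_cast
      ring
    rw [hd]
    ring
  calc 2 * ∑ d ∈ Icc 1 (N - 1), (1 / (d : ℝ)) * ∑ i ∈ range d, γ i * δ (d - 1 - i)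
      ≤ 2 * ∑ i ∈ range (N - 1), ∑ j ∈ range (N - 1), γ i * δ j / (i + j + 1) := by
        rw [hconv]
        gcongr
        exact sum_Icc_sum_range_le_sum_range_sum_range (N - 1)
          (F := fun i j ↦ γ i * δ j / ((i : ℝ) + j + 1)) fun i j ↦
            div_nonneg (mul_nonneg (hγ i) (hδ j)) (by positivity)
    _ ≤ π * ∑ i ∈ range (N - 1), (γ i ^ 2 + δ i ^ 2) := by
        linarith [sum_range_sum_range_mul_div_add_add_one_le (N - 1) γ δ]
    _ ≤ π * ∑ i ∈ range N, (γ i ^ 2 + δ i ^ 2) := by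
        gcongr
        exact N.sub_le 1
    _ ≤ π * N := by gcongr
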